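/- Let n, m ≥ 1, let W ∈ ℝ^{n×m} be an assignment matrix, let K_uu be an invertible symmetric m×m real matrix, let K_fu be an n×m real matrix, let K_ff be a symmetric n×n real matrix, and let β, γ ≥ 0. Suppose that every entry of K_ff − W K_uu Wᵀ has absolute value at most β, every entry of K_fu − W K_uu has absolute value at most β, and every entry of W − K_fu K_uu^{−1} has absolute value at most γ. Then every eigenvalue λ of the symmetric matrix K_ff − K_fu K_uu^{−1} K_fuᵀ satisfies |λ| ≤ n(3β + mβγ). -/

import Mathlib

/-!
With the residuals `A = K_ff - W K_uu Wᵀ`, `B = K_fu - W K_uu` and `C = W - K_fu K_uu⁻¹`, the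
Schur complement `K_ff - K_fu K_uu⁻¹ K_fuᵀ` equals `A - W Bᵀ - B Wᵀ + C Bᵀ`. Multiplying by an
assignment matrix only selects entries, so every entry of the Schur complement is at most
`3β + mβγ` in absolute value, and Gershgorin's theorem bounds each eigenvalue by a row sum of
absolute values, hence by `n (3β + mβγ)`.
-/

open Matrix

/-- An assignment matrix: each row has exactly one entry equal to `1`
and all other entries equal to `0`. -/
def IsAssignmentMatrix {n m : ℕ} (W : Matrix (Fin n) (Fin m) ℝ) : Prop :=
  ∀ i, ∃ j, W i j = 1 ∧ ∀ j', j' ≠ j → W i j' = 0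

namespace IsAssignmentMatrix

variable {n m : ℕ} {W : Matrix (Fin n) (Fin m) ℝ}

theorem exists_row_eq_single (hW : IsAssignmentMatrix W) (i : Fin n) :
    ∃ j, W i = Pi.single j 1 := by
  obtain ⟨j, hj, hW0⟩ := hW i
  refine ⟨j, funext fun j' => ?_⟩
  by_cases h : j' = j
  · subst h
    simp [hj]
  · simp [h, hW0 j' h]

theorem abs_mul_apply_le {ι : Type*} (hW : IsAssignmentMatrix W) {M : Matrix (Fin m) ι ℝ}
    {b : ℝ} (hM : ∀ j k, |M j k| ≤ b) (i : Fin n) (k : ι) : |(W * M) i k| ≤ b := by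
  obtain ⟨j, hj⟩ := hW.exists_row_eq_single i
  simpa [mul_apply', hj] using hM j k

end IsAssignmentMatrix

namespace Matrix

theorem abs_mul_apply_le {ι κ ν : Type*} [Fintype κ] {A : Matrix ι κ ℝ} {B : Matrix κ ν ℝ}
    {a b : ℝ} {i : ι} {k : ν} (hA : ∀ j, |A i j| ≤ a) (hB : ∀ j, |B j k| ≤ b) :
    |(A * B) i k| ≤ Fintype.card κ * (a * b) := by
  calc |(A * B) i k| ≤ ∑ j, |A i j * B j k| := Finset.abs_sum_le_sum_abs _ _
    _ ≤ ∑ _j : κ, a * b := Finset.sum_le_sum fun j _ => by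
        rw [abs_mul]
        exact mul_le_mul (hA j) (hB j) (abs_nonneg _) ((abs_nonneg _).trans (hA j))
    _ = Fintype.card κ * (a * b) := by simp

theorem sub_mul_inv_mul_transpose_eq {R ι κ : Type*} [CommRing R] [Fintype κ] [DecidableEq κ]
    (G : Matrix ι ι R) (F W : Matrix ι κ R) {K : Matrix κ κ R} (hK : IsUnit K.det)
    (hKs : K.IsSymm) :
    G - F * K⁻¹ * Fᵀ = (G - W * K * Wᵀ) - W * (F - W * K)ᵀ - (F - W * K) * Wᵀ
      + (W - F * K⁻¹) * (F - W * K)ᵀ := by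
  have hFK : F * K⁻¹ * K = F := nonsing_inv_mul_cancel_right _ _ hK
  rw [transpose_sub, transpose_mul, hKs.eq]
  simp only [Matrix.sub_mul, Matrix.mul_sub, ← Matrix.mul_assoc, hFK]
  abel

theorem abs_eigenvalue_le_card_mul {ι : Type*} [Fintype ι] [DecidableEq ι] {A : Matrix ι ι ℝ}
    {c μ : ℝ} {v : ι → ℝ} (hA : ∀ i j, |A i j| ≤ c) (hv : v ≠ 0) (hAv : A *ᵥ v = μ • v) :
    |μ| ≤ Fintype.card ι * c := by
  have hμ : Module.End.HasEigenvalue (toLin' A) μ :=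
    Module.End.hasEigenvalue_of_hasEigenvector
      ⟨Module.End.mem_eigenspace_iff.mpr (by rwa [toLin'_apply]), hv⟩
  obtain ⟨k, hk⟩ := eigenvalue_mem_ball hμ
  rw [Metric.mem_closedBall, Real.dist_eq] at hk
  calc |μ| ≤ |A k k| + ∑ j ∈ Finset.univ.erase k, |A k j| := by
        have := abs_sub_abs_le_abs_sub μ (A k k)
        simp only [Real.norm_eq_abs] at hk
        linarith
    _ = ∑ j, |A k j| := Finset.add_sum_erase _ (fun j => |A k j|) (Finset.mem_univ k)
    _ ≤ ∑ _j : ι, c := Finset.sum_le_sum fun j _ => hA k j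
    _ = Fintype.card ι * c := by simp

end Matrix

theorem abs_schur_complement_apply_le {n m : ℕ} {W : Matrix (Fin n) (Fin m) ℝ}
    (hW : IsAssignmentMatrix W) {K_uu : Matrix (Fin m) (Fin m) ℝ} (hKuu : IsUnit K_uu.det)
    (hKuuSymm : K_uu.IsSymm) {K_fu : Matrix (Fin n) (Fin m) ℝ} {K_ff : Matrix (Fin n) (Fin n) ℝ}
    {β γ : ℝ} (h1 : ∀ i i', |(K_ff - W * K_uu * Wᵀ) i i'| ≤ β)
    (h2 : ∀ i j, |(K_fu - W * K_uu) i j| ≤ β) (h3 : ∀ i j, |(W - K_fu * K_uu⁻¹) i j| ≤ γ)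
    (i i' : Fin n) : |(K_ff - K_fu * K_uu⁻¹ * K_fuᵀ) i i'| ≤ 3 * β + m * β * γ := by
  set B := K_fu - W * K_uu
  have hWB : |(W * Bᵀ) i i'| ≤ β := hW.abs_mul_apply_le (fun j k => h2 k j) i i'
  have hBW : |(B * Wᵀ) i i'| ≤ β := by
    rw [← transpose_transpose B, ← transpose_mul]
    exact hW.abs_mul_apply_le (fun j k => h2 k j) i' i
  have hCB : |((W - K_fu * K_uu⁻¹) * Bᵀ) i i'| ≤ m * (γ * β) := by
    simpa using abs_mul_apply_le (h3 i) (fun j => h2 i' j)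
  have hA := h1 i i'
  rw [sub_mul_inv_mul_transpose_eq K_ff K_fu W hKuu hKuuSymm, Matrix.add_apply,
    Matrix.sub_apply, Matrix.sub_apply]
  rw [abs_le] at hWB hBW hCB hA ⊢
  constructor <;> linarith

theorem stmt_7 (n m : ℕ)
    (W : Matrix (Fin n) (Fin m) ℝ) (hW : IsAssignmentMatrix W)
    (K_uu : Matrix (Fin m) (Fin m) ℝ) (hKuu : IsUnit K_uu.det) (hKuuSymm : K_uu.IsSymm)
    (K_fu : Matrix (Fin n) (Fin m) ℝ)
    (K_ff : Matrix (Fin n) (Fin n) ℝ)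
    (β γ : ℝ)
    (h1 : ∀ i i', |(K_ff - W * K_uu * Wᵀ) i i'| ≤ β)
    (h2 : ∀ i j, |(K_fu - W * K_uu) i j| ≤ β)
    (h3 : ∀ i j, |(W - K_fu * K_uu⁻¹) i j| ≤ γ) :
    ∀ (μ : ℝ) (v : Fin n → ℝ), v ≠ 0 →
      (K_ff - K_fu * K_uu⁻¹ * K_fuᵀ).mulVec v = μ • v →
      |μ| ≤ n * (3 * β + m * β * γ) := by
  intro μ v hv hev
  simpa using abs_eigenvalue_le_card_mul
    (abs_schur_complement_apply_le hW hKuu hKuuSymm h1 h2 h3) hv hev
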